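/- Let X be a group, G ≤ X a subgroup, H ≤ G, and K a normal subgroup of H with K = T ∩ H for some subgroup T ≤ X. If J := ⋂_{g ∈ H} T^g, then H ∩ J = K, H ≤ N_X(J), and H/K is isomorphic to the subgroup HJ/J of N_X(J)/J. -/

import Mathlib

/-!
Since `1 ∈ H`, the core `J` lies in `T`, so `H ⊓ J ≤ T ⊓ H = K`; conversely `K`, being normal in `H`,
lies in every `H`-conjugate of `T`. Conjugating by `h ∈ H` only permutes the conjugates `T^g`, `g ∈ H`,
so `H` normalizes `J`. The map `H → N_X(J) ⧸ J` then has kernel `H ⊓ J = K` and image `HJ/J`.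
-/

/-- conjugate `T^g = g⁻¹ T g` of a subgroup. -/
def conjSubgroup {X : Type*} [Group X] (T : Subgroup X) (g : X) : Subgroup X :=
  Subgroup.map (MulAut.conj g⁻¹).toMonoidHom T

namespace Subgroup

variable {X : Type*} [Group X]

lemma mem_conjSubgroup {T : Subgroup X} {g x : X} :
    x ∈ conjSubgroup T g ↔ g * x * g⁻¹ ∈ T := by
  constructor
  · rintro ⟨t, ht, rfl⟩
    simpa [MulAut.conj_apply, mul_assoc] using ht
  · intro h
    exact ⟨g * x * g⁻¹, h, by simp [mul_assoc]⟩

lemma mem_iInf_conjSubgroup {T H : Subgroup X} {x : X} :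
    x ∈ ⨅ g ∈ H, conjSubgroup T g ↔ ∀ g ∈ H, g * x * g⁻¹ ∈ T := by
  simp only [mem_iInf, mem_conjSubgroup]

lemma iInf_conjSubgroup_le (T H : Subgroup X) : ⨅ g ∈ H, conjSubgroup T g ≤ T := fun x hx => by
  simpa using mem_iInf_conjSubgroup.mp hx 1 H.one_mem

lemma inf_le_iInf_conjSubgroup {T H : Subgroup X} (hnormal : ((T ⊓ H).subgroupOf H).Normal) :
    T ⊓ H ≤ ⨅ g ∈ H, conjSubgroup T g := fun k hk =>
  mem_iInf_conjSubgroup.mpr fun g hg =>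
    (hnormal.conj_mem ⟨k, hk.2⟩ hk ⟨g, hg⟩ : g * k * g⁻¹ ∈ T ⊓ H).1

lemma inf_iInf_conjSubgroup_eq {T H : Subgroup X} (hnormal : ((T ⊓ H).subgroupOf H).Normal) :
    H ⊓ ⨅ g ∈ H, conjSubgroup T g = T ⊓ H :=
  le_antisymm (fun _ hx => ⟨iInf_conjSubgroup_le T H hx.2, hx.1⟩)
    (le_inf inf_le_right (inf_le_iInf_conjSubgroup hnormal))

lemma le_normalizer_iInf_conjSubgroup (T H : Subgroup X) :
    H ≤ normalizer ((⨅ g ∈ H, conjSubgroup T g : Subgroup X) : Set X) := by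
  intro h hh
  rw [mem_normalizer_iff]
  intro x
  simp only [mem_iInf_conjSubgroup]
  constructor
  · intro hx g hg
    simpa [mul_assoc] using hx (g * h) (H.mul_mem hg hh)
  · intro hx g hg
    simpa [mul_assoc] using hx (g * h⁻¹) (H.mul_mem hg (H.inv_mem hh))

noncomputable def quotientEquivMapMk {N H J K : Subgroup X} [(J.subgroupOf N).Normal]
    [(K.subgroupOf H).Normal] (hHN : H ≤ N) (hK : H ⊓ J = K) :
    H ⧸ K.subgroupOf H ≃* map (QuotientGroup.mk' (J.subgroupOf N)) (H.subgroupOf N) :=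
  let f : H →* N ⧸ J.subgroupOf N := (QuotientGroup.mk' (J.subgroupOf N)).comp (inclusion hHN)
  have hker : K.subgroupOf H = f.ker := by
    rw [← hK, inf_subgroupOf_left]
    ext x
    simp [f, mem_subgroupOf]
  have hrange : f.range = map (QuotientGroup.mk' (J.subgroupOf N)) (H.subgroupOf N) := by
    rw [MonoidHom.range_comp, inclusion_range]
  (QuotientGroup.quotientMulEquivOfEq hker).trans
    ((QuotientGroup.quotientKerEquivRange f).trans (MulEquiv.subgroupCongr hrange))

end Subgroup

theorem stmt_8_general {X : Type*} [Group X] (H K T : Subgroup X)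
    (hKnorm : (K.subgroupOf H).Normal) (hKT : K = T ⊓ H)
    (J : Subgroup X) (hJ : J = ⨅ g ∈ H, conjSubgroup T g) :
    H ⊓ J = K ∧ H ≤ Subgroup.normalizer (J : Set X) ∧
    Nonempty ((H ⧸ K.subgroupOf H) ≃*
      Subgroup.map (QuotientGroup.mk' (J.subgroupOf (Subgroup.normalizer (J : Set X))))
        (H.subgroupOf (Subgroup.normalizer (J : Set X)))) := by
  have hcore : H ⊓ J = K := hKT ▸ hJ ▸ Subgroup.inf_iInf_conjSubgroup_eq (hKT ▸ hKnorm)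
  have hnorm : H ≤ Subgroup.normalizer (J : Set X) :=
    hJ ▸ Subgroup.le_normalizer_iInf_conjSubgroup T H
  exact ⟨hcore, hnorm, ⟨Subgroup.quotientEquivMapMk hnorm hcore⟩⟩

/-- If `K = T ∩ H` is normal in `H ≤ G ≤ X` and `J = ⋂_{g ∈ H} T^g`, then
`H ∩ J = K`, `H ≤ N_X(J)`, and `H/K` is isomorphic to the subgroup `HJ/J` of
`N_X(J)/J` (the image of `H` in `N_X(J)/J`). -/
theorem stmt_8 {X : Type*} [Group X] (G H K T : Subgroup X) (hHG : H ≤ G)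
    (hKH : K ≤ H) (hKnorm : (K.subgroupOf H).Normal) (hKT : K = T ⊓ H)
    (J : Subgroup X) (hJ : J = ⨅ g ∈ H, conjSubgroup T g) :
    H ⊓ J = K ∧ H ≤ Subgroup.normalizer (J : Set X) ∧
    Nonempty ((H ⧸ K.subgroupOf H) ≃*
      Subgroup.map (QuotientGroup.mk' (J.subgroupOf (Subgroup.normalizer (J : Set X))))
        (H.subgroupOf (Subgroup.normalizer (J : Set X)))) :=
  stmt_8_general H K T hKnorm hKT J hJ
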